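/- Let ω be an invertible singleton-inductive weight supported on non-crossing partitions, and let (c^ω_n) be the cumulant functionals defined recursively by the moment–cumulant formula F(a_1⋯a_n) = Σ_{π ∈ NC(n)} ω(π) c^ω_π(a_1,...,a_n) in an operator-valued probability space (A, B, F). Then for all n ≥ 2, c^ω_n(a_1,...,a_n) = 0 whenever some argument a_i lies in B. -/

import Mathlib

attribute [local instance] Classical.propDecidable

instance {α : Type*} [Finite α] : Finite (Setoid α) :=
  Finite.of_injective (fun s : Setoid α => s.r)
    (fun a b h => Setoid.ext fun x y => by rw [show a.r = b.r from h])

noncomputable instance {α : Type*} [Finite α] : Fintype (Setoid α) :=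
  Fintype.ofFinite _

/-- A set partition of `{0,...,n-1}` (encoded as a `Setoid (Fin n)`) is an *interval
partition* iff each of its blocks consists of consecutive integers. -/
def IsIntervalSetoid {n : ℕ} (s : Setoid (Fin n)) : Prop :=
  ∀ a b c : Fin n, a ≤ b → b ≤ c → s.r a c → s.r a b

/-- A set partition is *non-crossing* iff there are no `a < b < c < d` with `a, c` in one
block and `b, d` in a different block. -/
def IsNoncrossing {n : ℕ} (s : Setoid (Fin n)) : Prop :=
  ∀ a b c d : Fin n, a < b → b < c → c < d → s.r a c → s.r b d → s.r a b

/-- A subset of `Fin n` is a *cyclic interval* iff it consists of cyclically consecutive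
residues mod `n`. -/
def IsCyclicInterval {n : ℕ} (B : Set (Fin n)) : Prop :=
  ∃ (b : Fin n) (k : ℕ), B = {x | ∃ i ≤ k, x = ((finRotate n) ^ i) b}

/-- A set partition of `Fin n` is a *cyclic-interval partition* iff all of its blocks are
cyclic intervals. -/
def IsCyclicIntervalSetoid {n : ℕ} (s : Setoid (Fin n)) : Prop :=
  ∀ a : Fin n, IsCyclicInterval {x | s.r a x}

/-- The singleton-insertion map `Ψ^n_r` : it inserts a singleton block at position `r`,
shifting the rest of the partition. -/
def insertSingleton {n : ℕ} (r : Fin (n + 1)) (s : Setoid (Fin n)) : Setoid (Fin (n + 1)) where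
  r a b := (a = r ∧ b = r) ∨ ∃ i j : Fin n, a = r.succAbove i ∧ b = r.succAbove j ∧ s.r i j
  iseqv := by
    constructor
    · intro a
      rcases eq_or_ne a r with h | h
      · exact Or.inl ⟨h, h⟩
      · obtain ⟨i, hi⟩ := Fin.exists_succAbove_eq h
        exact Or.inr ⟨i, i, hi.symm, hi.symm, s.refl i⟩
    · rintro a b (⟨h1, h2⟩ | ⟨i, j, h1, h2, h3⟩)
      · exact Or.inl ⟨h2, h1⟩
      · exact Or.inr ⟨j, i, h2, h1, s.symm h3⟩
    · rintro a b c (⟨h1, h2⟩ | ⟨i, j, h1, h2, h3⟩) (⟨g1, g2⟩ | ⟨k, l, g1, g2, g3⟩)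
      · exact Or.inl ⟨h1, g2⟩
      · exact absurd (g1.symm.trans h2) (Fin.succAbove_ne r k)
      · exact absurd (h2.symm.trans g1) (Fin.succAbove_ne r j)
      · have hjk : j = k := Fin.succAbove_right_injective (h2.symm.trans g1)
        exact Or.inr ⟨i, l, h1, g2, s.trans h3 (hjk ▸ g3)⟩

/-- The elements of `Fin n` that do NOT form singleton blocks of `s`. -/
noncomputable def nonSingletons {n : ℕ} (s : Setoid (Fin n)) : Finset (Fin n) :=
  Finset.univ.filter fun x => ∃ y, y ≠ x ∧ s.r x y

/-- `RS s` removes all singleton blocks of the partition `s` and relabels the remaining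
elements in an order-preserving way. -/
noncomputable def RS {n : ℕ} (s : Setoid (Fin n)) : Setoid (Fin (nonSingletons s).card) where
  r i j := s.r ((nonSingletons s).orderIsoOfFin rfl i).1 ((nonSingletons s).orderIsoOfFin rfl j).1
  iseqv := ⟨fun i => s.refl _, fun h => s.symm h, fun h h' => s.trans h h'⟩

/-- An *almost-interval* partition: non-crossing, and removing the singleton blocks yields
an interval partition. -/
def IsAlmostInterval {n : ℕ} (s : Setoid (Fin n)) : Prop :=
  IsNoncrossing s ∧ IsIntervalSetoid (RS s)

/-- A *cyclic almost-interval* partition: non-crossing, and removing the singleton blocks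
yields a cyclic-interval partition. -/
def IsAlmostCyclicInterval {n : ℕ} (s : Setoid (Fin n)) : Prop :=
  IsNoncrossing s ∧ IsCyclicIntervalSetoid (RS s)

/-- The number of crossings of a set partition: the number of quadruples `a < b < c < d`
with `a ~ c`, `b ~ d` lying in two different blocks. -/
noncomputable def crossNum {n : ℕ} (s : Setoid (Fin n)) : ℕ :=
  Finset.card (Finset.univ.filter fun p : Fin n × Fin n × Fin n × Fin n =>
    p.1 < p.2.1 ∧ p.2.1 < p.2.2.1 ∧ p.2.2.1 < p.2.2.2 ∧
      s.r p.1 p.2.2.1 ∧ s.r p.2.1 p.2.2.2 ∧ ¬ s.r p.1 p.2.1)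

/-- `{r}` is a singleton block of the partition `s`. -/
def IsSingletonBlock {n : ℕ} (r : Fin n) (s : Setoid (Fin n)) : Prop :=
  ∀ y, s.r r y → y = r

/-- The partition `{{1,2},{3},...,{n}}` (in `Fin n` indexing: block `{0,1}`, rest singletons). -/
def pairBlockFirst (n : ℕ) : Setoid (Fin n) where
  r x y := x = y ∨ ((x : ℕ) < 2 ∧ (y : ℕ) < 2)
  iseqv := by
    refine ⟨fun x => Or.inl rfl, ?_, ?_⟩
    · rintro x y (rfl | h)
      · exact Or.inl rfl
      · exact Or.inr ⟨h.2, h.1⟩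
    · rintro x y z (rfl | h) h'
      · exact h'
      · rcases h' with rfl | h'
        · exact Or.inr h
        · exact Or.inr ⟨h.1, h'.2⟩

/-- The partition of `Fin n` whose blocks are the singleton `{k}` and its complement. -/
def singletonAt {n : ℕ} (k : Fin n) : Setoid (Fin n) where
  r x y := x = y ∨ (x ≠ k ∧ y ≠ k)
  iseqv := by
    refine ⟨fun x => Or.inl rfl, ?_, ?_⟩
    · rintro x y (rfl | h)
      · exact Or.inl rfl
      · exact Or.inr ⟨h.2, h.1⟩
    · rintro x y z (rfl | h) h'
      · exact h'
      · rcases h' with rfl | h'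
        · exact Or.inr h
        · exact Or.inr ⟨h.1, h'.2⟩

/-- The order embedding `Fin (n - m) → Fin n` that skips the `m` positions `j, ..., j+m-1`. -/
def skipEmb {n : ℕ} (m j : ℕ) (h : j + m ≤ n) (i : Fin (n - m)) : Fin n :=
  ⟨if (i : ℕ) < j then (i : ℕ) else (i : ℕ) + m, by have := i.isLt; split <;> omega⟩

/-! Strong induction on `n`, proving more generally that `c_π(a) = 0` for every non-crossing `π`
in which some argument `a_i` with `F a_i = a_i` lies in a non-singleton block; along the way,
`c_π(a) = 0` whenever some `a_i = 0`, by the same kind of induction.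

For `π ≠ 1_n` remove an interval block with the nesting recursion. If it is the block of `i`,
its cumulant vanishes by induction, leaving a zero argument. Otherwise the block of `i` has a
gap, a non-crossing partition has an interval block nested inside that gap, and since the gap
is bounded on both sides by the block of `i`, that interval block can be merged into a
neighbour other than `a_i`.

For `π = 1_n`, in the moment–cumulant formula for `F(a_1 ⋯ a_n)` only the partitions in which
`{i}` is a singleton block contribute besides `1_n` itself. As `c_1(a_i) = F(a_i) = a_i`, the
nesting recursion merges `a_i` into a neighbour, and by singleton-inductivity of `ω` these terms
form the moment–cumulant formula for the shorter word, which has the same product. Hence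
`ω(1_n) c_n(a) = 0`.
-/

section Partitions

variable {n : ℕ}

theorem skipEmb_val {m j : ℕ} (h : j + m ≤ n) (t : Fin (n - m)) :
    (skipEmb m j h t : ℕ) = if (t : ℕ) < j then (t : ℕ) else (t : ℕ) + m := rfl

theorem skipEmb_strictMono {m j : ℕ} (h : j + m ≤ n) : StrictMono (skipEmb m j h) := by
  intro s t hst
  have : (s : ℕ) < t := hst
  simp only [Fin.lt_def, skipEmb_val]
  split_ifs <;> omega

theorem exists_skipEmb_eq {m j : ℕ} (h : j + m ≤ n) {x : Fin n}
    (hx : (x : ℕ) < j ∨ j + m ≤ (x : ℕ)) : ∃ t, skipEmb m j h t = x := by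
  have := x.isLt
  by_cases hxj : (x : ℕ) < j
  · exact ⟨⟨x, by omega⟩, Fin.ext (by simp [skipEmb_val, hxj])⟩
  · exact ⟨⟨x - m, by omega⟩, Fin.ext (by simp only [skipEmb_val]; split_ifs <;> omega)⟩

theorem skipEmb_one_eq_succAbove (r : Fin (n + 1)) (h : (r : ℕ) + 1 ≤ n + 1) :
    skipEmb 1 r h = r.succAbove := by
  funext t
  ext
  rw [skipEmb_val]
  split_ifs with htr
  · rw [Fin.succAbove_of_castSucc_lt r t (by rwa [Fin.lt_def, Fin.val_castSucc]),
      Fin.val_castSucc]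
  · rw [Fin.succAbove_of_le_castSucc r t (by rw [Fin.le_def, Fin.val_castSucc]; omega),
      Fin.val_succ]

theorem IsNoncrossing.comap {m : ℕ} {s : Setoid (Fin n)} (hs : IsNoncrossing s)
    {f : Fin m → Fin n} (hf : StrictMono f) : IsNoncrossing (s.comap f) :=
  fun _ _ _ _ hab hbc hcd hac hbd => hs _ _ _ _ (hf hab) (hf hbc) (hf hcd) hac hbd

theorem isNoncrossing_top : IsNoncrossing (⊤ : Setoid (Fin n)) :=
  fun _ _ _ _ _ _ _ _ _ => trivial

theorem IsNoncrossing.rel_between {s : Setoid (Fin n)} (hs : IsNoncrossing s) {x b z d : Fin n}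
    (hxb : x < b) (hbz : b < z) (hxz : s.r x z) (hxb' : ¬ s.r x b) (hbd : s.r b d) :
    x < d ∧ d < z := by
  have hxd : ¬ s.r x d := fun h => hxb' (s.trans h (s.symm hbd))
  refine ⟨lt_of_le_of_ne ?_ fun h => hxd (h ▸ s.refl x), lt_of_le_of_ne ?_ fun h => hxd (h ▸ hxz)⟩
  · by_contra! hdx
    exact hxd (s.symm (hs d x b z hdx hxb hbz (s.symm hbd) hxz))
  · by_contra! hzd
    exact hxb' (hs x b z d hxb hbz hzd hxz hbd)

structure IsIntervalBlock (s : Setoid (Fin n)) (j m : ℕ) : Prop where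
  one_le : 1 ≤ m
  add_le : j + m ≤ n
  rel_iff : ∀ x : Fin n, s.r ⟨j, by omega⟩ x ↔ j ≤ (x : ℕ) ∧ (x : ℕ) < j + m

theorem IsIntervalBlock.rel_iff_of_mem {s : Setoid (Fin n)} {j m : ℕ} (hb : IsIntervalBlock s j m)
    {x : Fin n} (hx : j ≤ (x : ℕ) ∧ (x : ℕ) < j + m) (y : Fin n) :
    s.r x y ↔ j ≤ (y : ℕ) ∧ (y : ℕ) < j + m :=
  ⟨fun h => (hb.rel_iff y).1 (s.trans ((hb.rel_iff x).2 hx) h),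
    fun h => s.trans (s.symm ((hb.rel_iff x).2 hx)) ((hb.rel_iff y).2 h)⟩

theorem IsIntervalBlock.eq_top {s : Setoid (Fin n)} {m : ℕ} (hb : IsIntervalBlock s 0 m)
    (hm : m = n) : s = ⊤ :=
  Setoid.ext fun x y => iff_true_intro <|
    (hb.rel_iff_of_mem ⟨Nat.zero_le _, by omega⟩ y).2 ⟨Nat.zero_le _, by omega⟩

theorem IsIntervalBlock.lt_of_ne_top {s : Setoid (Fin n)} {j m : ℕ} (hb : IsIntervalBlock s j m)
    (htop : s ≠ ⊤) : m < n := by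
  by_contra! hmn
  obtain rfl : j = 0 := by have := hb.add_le; omega
  exact htop (hb.eq_top (by have := hb.add_le; omega))

theorem IsIntervalBlock.exists_adjacent {s : Setoid (Fin n)} {j m : ℕ} (hb : IsIntervalBlock s j m)
    (htop : s ≠ ⊤) : ∃ q, q = j + m ∧ j + m < n ∨ q + 1 = j := by
  by_cases hjm : j + m < n
  · exact ⟨j + m, Or.inl ⟨rfl, hjm⟩⟩
  · refine ⟨j - 1, Or.inr ?_⟩
    rcases Nat.eq_zero_or_pos j with rfl | hj
    · exact absurd (hb.eq_top (by have := hb.add_le; omega)) htop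
    · omega

theorem exists_isIntervalBlock_of_convex {s : Setoid (Fin n)} (b : Fin n)
    (hb : ∀ x y z : Fin n, x ≤ y → y ≤ z → s.r b x → s.r b z → s.r b y) :
    ∃ j m, IsIntervalBlock s j m ∧ j ≤ (b : ℕ) ∧ (b : ℕ) < j + m := by
  set S := Finset.univ.filter (s.r b)
  have hS : S.Nonempty := ⟨b, by simp [S]⟩
  have hlo : s.r b (S.min' hS) := (Finset.mem_filter.1 (S.min'_mem hS)).2
  have hhi : s.r b (S.max' hS) := (Finset.mem_filter.1 (S.max'_mem hS)).2
  have hbound : ∀ x, s.r b x → S.min' hS ≤ x ∧ x ≤ S.max' hS := fun x hx =>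
    ⟨S.min'_le x (by simp [S, hx]), S.le_max' x (by simp [S, hx])⟩
  have hlohi := (hbound _ hhi).1
  have hbb := hbound b (s.refl b)
  refine ⟨S.min' hS, S.max' hS - S.min' hS + 1, ⟨by omega, by omega, fun x => ?_⟩, ?_, ?_⟩
  · change s.r (S.min' hS) x ↔ _
    constructor
    · intro hx
      have := hbound x (s.trans hlo hx)
      rw [Fin.le_def, Fin.le_def] at this
      omega
    · intro hx
      exact s.trans (s.symm hlo) (hb _ x _ (Fin.le_def.2 hx.1) (Fin.le_def.2 (by omega)) hlo hhi)
  · exact Fin.le_def.1 hbb.1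
  · have := Fin.le_def.1 hbb.2
    omega

theorem IsNoncrossing.exists_nested_of_not_convex {s : Setoid (Fin n)} (hs : IsNoncrossing s)
    {b : Fin n} (hb : ¬ ∀ x y z : Fin n, x ≤ y → y ≤ z → s.r b x → s.r b z → s.r b y) :
    ∃ x y z : Fin n, s.r b x ∧ s.r b z ∧ ∀ w, s.r y w → (x : ℕ) < w ∧ (w : ℕ) < z := by
  push Not at hb
  obtain ⟨x, y, z, hxy, hyz, hbx, hbz, hby⟩ := hb
  have hxy' : x < y := lt_of_le_of_ne hxy fun h => hby (h ▸ hbx)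
  have hyz' : y < z := lt_of_le_of_ne hyz fun h => hby (h ▸ hbz)
  exact ⟨x, y, z, hbx, hbz, fun w hyw =>
    hs.rel_between hxy' hyz' (s.trans (s.symm hbx) hbz) (fun h => hby (s.trans hbx h)) hyw⟩

theorem IsNoncrossing.exists_isIntervalBlock_within {s : Setoid (Fin n)} (hs : IsNoncrossing s) :
    ∀ (lo hi : ℕ) (b : Fin n), (∀ x, s.r b x → lo ≤ (x : ℕ) ∧ (x : ℕ) ≤ hi) →
      ∃ j m, IsIntervalBlock s j m ∧ lo ≤ j ∧ j + m ≤ hi + 1 := by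
  intro lo hi
  induction h : hi - lo using Nat.strong_induction_on generalizing lo hi with
  | _ d IH =>
  intro b hbounds
  by_cases hconv : ∀ x y z : Fin n, x ≤ y → y ≤ z → s.r b x → s.r b z → s.r b y
  · obtain ⟨j, m, hb, hjb, hbjm⟩ := exists_isIntervalBlock_of_convex b hconv
    have hmem : ∀ y : Fin n, s.r b y ↔ j ≤ (y : ℕ) ∧ (y : ℕ) < j + m :=
      hb.rel_iff_of_mem ⟨hjb, hbjm⟩
    have := hb.add_le
    have hj := hbounds ⟨j, by omega⟩ ((hmem _).2 ⟨le_rfl, by simp; omega⟩)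
    have hjm := hbounds ⟨j + m - 1, by omega⟩ ((hmem _).2 ⟨by simp; omega, by simp; omega⟩)
    exact ⟨j, m, hb, hj.1, by simp at hjm; omega⟩
  · obtain ⟨x, y, z, hbx, hbz, hy⟩ := hs.exists_nested_of_not_convex hconv
    have hx := hbounds x hbx
    have hz := hbounds z hbz
    have hxz := hy y (s.refl y)
    obtain ⟨j, m, hb, hj, hjm⟩ :=
      IH (z - 1 - (x + 1)) (by omega) (x + 1) (z - 1) rfl y fun w hyw => by
        have := hy w hyw; omega
    exact ⟨j, m, hb, by omega, by omega⟩

theorem IsNoncrossing.isIntervalBlock_or_nested {s : Setoid (Fin n)} (hs : IsNoncrossing s)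
    (i : Fin n) :
    (∃ j m, IsIntervalBlock s j m ∧ j ≤ (i : ℕ) ∧ (i : ℕ) < j + m) ∨
      ∃ (j m : ℕ) (x z : Fin n), IsIntervalBlock s j m ∧ s.r i x ∧ s.r i z ∧ (x : ℕ) < j ∧
        j + m ≤ (z : ℕ) := by
  by_cases hconv : ∀ x y z : Fin n, x ≤ y → y ≤ z → s.r i x → s.r i z → s.r i y
  · exact Or.inl (exists_isIntervalBlock_of_convex i hconv)
  · obtain ⟨x, y, z, hix, hiz, hy⟩ := hs.exists_nested_of_not_convex hconv
    have hxz := hy y (s.refl y)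
    obtain ⟨j, m, hb, hj, hjm⟩ := hs.exists_isIntervalBlock_within (x + 1) (z - 1) y
      fun w hyw => by have := hy w hyw; omega
    exact Or.inr ⟨j, m, x, z, hb, hix, hiz, by omega, by omega⟩

theorem isSingletonBlock_insertSingleton (r : Fin (n + 1)) (π : Setoid (Fin n)) :
    IsSingletonBlock r (insertSingleton r π) := by
  rintro y (⟨-, rfl⟩ | ⟨i, j, hi, -, -⟩)
  · rfl
  · exact absurd hi.symm (Fin.succAbove_ne r i)

theorem comap_succAbove_insertSingleton (r : Fin (n + 1)) (π : Setoid (Fin n)) :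
    (insertSingleton r π).comap r.succAbove = π := by
  refine Setoid.ext fun i j => ⟨?_, fun h => Or.inr ⟨i, j, rfl, rfl, h⟩⟩
  rintro (⟨h, -⟩ | ⟨i', j', hi, hj, h⟩)
  · exact absurd h (Fin.succAbove_ne r i)
  · rwa [Fin.succAbove_right_injective hi, Fin.succAbove_right_injective hj]

theorem insertSingleton_comap_succAbove {r : Fin (n + 1)} {s : Setoid (Fin (n + 1))}
    (hs : IsSingletonBlock r s) : insertSingleton r (s.comap r.succAbove) = s := by
  refine Setoid.ext fun x y => ⟨?_, fun h => ?_⟩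
  · rintro (⟨rfl, rfl⟩ | ⟨i, j, rfl, rfl, h⟩)
    exacts [s.refl _, h]
  · by_cases hx : x = r
    · exact Or.inl ⟨hx, hs y (hx ▸ h)⟩
    · have hy : y ≠ r := fun hy => hx (hs x (s.symm (hy ▸ h)))
      obtain ⟨i, rfl⟩ := Fin.exists_succAbove_eq hx
      obtain ⟨j, rfl⟩ := Fin.exists_succAbove_eq hy
      exact Or.inr ⟨i, j, rfl, rfl, h⟩

theorem isNoncrossing_insertSingleton {π : Setoid (Fin n)} (hπ : IsNoncrossing π)
    (r : Fin (n + 1)) : IsNoncrossing (insertSingleton r π) := by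
  rintro a b c d hab hbc hcd (⟨rfl, rfl⟩ | ⟨ia, ic, rfl, rfl, hac⟩) hbd
  · exact absurd (hab.trans hbc) (lt_irrefl _)
  rcases hbd with ⟨rfl, rfl⟩ | ⟨ib, id, rfl, rfl, hbd⟩
  · exact absurd (hbc.trans hcd) (lt_irrefl _)
  rw [Fin.succAbove_lt_succAbove_iff] at hab hbc hcd
  exact Or.inr ⟨ia, ib, rfl, rfl, hπ ia ib ic id hab hbc hcd hac hbd⟩

theorem isIntervalBlock_insertSingleton (r : Fin (n + 1)) (π : Setoid (Fin n)) :
    IsIntervalBlock (insertSingleton r π) r 1 where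
  one_le := le_rfl
  add_le := r.isLt
  rel_iff x := by
    change (insertSingleton r π).r r x ↔ _
    refine ⟨fun h => ?_, fun h => ?_⟩
    · rw [isSingletonBlock_insertSingleton r π x h]
      omega
    · rw [show x = r from Fin.ext (by omega)]

theorem sum_filter_isSingletonBlock {M : Type*} [AddCommMonoid M] (r : Fin (n + 1))
    (f : Setoid (Fin (n + 1)) → M) :
    ∑ π ∈ (Finset.univ.filter fun π : Setoid (Fin (n + 1)) => IsNoncrossing π).filter
        (IsSingletonBlock r), f π =
      ∑ π ∈ Finset.univ.filter fun π : Setoid (Fin n) => IsNoncrossing π,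
        f (insertSingleton r π) := by
  refine Finset.sum_nbij' (fun π => π.comap r.succAbove) (insertSingleton r) ?_ ?_ ?_ ?_ ?_
  · intro π hπ
    simp only [Finset.mem_filter, Finset.mem_univ, true_and] at hπ ⊢
    exact hπ.1.comap (Fin.strictMono_succAbove r)
  · intro π hπ
    simp only [Finset.mem_filter, Finset.mem_univ, true_and] at hπ ⊢
    exact ⟨isNoncrossing_insertSingleton hπ r, isSingletonBlock_insertSingleton r π⟩
  · intro π hπ
    simp only [Finset.mem_filter, Finset.mem_univ, true_and] at hπ
    exact insertSingleton_comap_succAbove hπ.2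
  · intro π _
    exact comap_succAbove_insertSingleton r π
  · intro π hπ
    simp only [Finset.mem_filter, Finset.mem_univ, true_and] at hπ
    rw [insertSingleton_comap_succAbove hπ.2]

end Partitions

theorem List.prod_ofFn_eq_of_mul_adjacent {M : Type*} [Monoid M] :
    ∀ {k : ℕ} (p : ℕ) (hp : p < k) (a : Fin (k + 1) → M) (b : Fin k → M),
      b ⟨p, hp⟩ = a ⟨p, by omega⟩ * a ⟨p + 1, by omega⟩ →
      (∀ t : Fin k, (t : ℕ) < p → b t = a t.castSucc) →
      (∀ t : Fin k, p < (t : ℕ) → b t = a t.succ) →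
      (List.ofFn b).prod = (List.ofFn a).prod
  | k + 1, 0, _, a, b, hp, _, hr => by
    rw [List.ofFn_succ, List.ofFn_succ, List.ofFn_succ, List.prod_cons, List.prod_cons,
      List.prod_cons, ← mul_assoc]
    congr 2
    exact congrArg List.ofFn (funext fun t => hr t.succ t.succ_pos)
  | k + 1, p + 1, hpk, a, b, hp, hl, hr => by
    rw [List.ofFn_succ, List.ofFn_succ, List.prod_cons, List.prod_cons,
      hl 0 (Nat.succ_pos p)]
    congr 1
    exact prod_ofFn_eq_of_mul_adjacent p (by omega) _ _ hp (fun t ht => hl t.succ (by simp; omega))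
      fun t ht => hr t.succ (by simp; omega)

def intervalArgs {n : ℕ} {A : Type*} (a : Fin n → A) (j m : ℕ) (h : j + m ≤ n) : Fin m → A :=
  fun t => a ⟨j + t, by omega⟩

/-- `cpart n π a` is `c^ω_π(a)`: the cumulant of an interval block is multiplied into the entry
right after the block, or into the one before it when the block ends the word. -/
structure IsMultiplicativeExtension {A : Type*} [Mul A] (c : (n : ℕ) → (Fin n → A) → A)
    (cpart : (n : ℕ) → Setoid (Fin n) → (Fin n → A) → A) : Prop where
  top : ∀ (n : ℕ) (a : Fin n → A), cpart n ⊤ a = c n a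
  nest_right : ∀ (n m j : ℕ), 1 ≤ m → ∀ (h : j + m < n) (π : Setoid (Fin n)),
      (∀ x : Fin n, π.r ⟨j, Nat.lt_of_le_of_lt (Nat.le_add_right j m) h⟩ x ↔
        j ≤ (x : ℕ) ∧ (x : ℕ) < j + m) →
      ∀ a : Fin n → A,
      cpart n π a = cpart (n - m) (Setoid.comap (skipEmb m j (le_of_lt h)) π)
        (fun i => if (i : ℕ) = j
          then c m (fun t => a ⟨j + t, Nat.lt_trans (Nat.add_lt_add_left t.isLt j) h⟩) *
            a ⟨j + m, h⟩
          else a (skipEmb m j (le_of_lt h) i))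
  nest_left : ∀ (n m j : ℕ) (hm : 1 ≤ m) (hj : 1 ≤ j) (h : j + m ≤ n) (π : Setoid (Fin n)),
      (∀ x : Fin n, π.r ⟨j, Nat.lt_of_lt_of_le (Nat.lt_add_of_pos_right hm) h⟩ x ↔
        j ≤ (x : ℕ) ∧ (x : ℕ) < j + m) →
      ∀ a : Fin n → A,
      cpart n π a = cpart (n - m) (Setoid.comap (skipEmb m j h) π)
        (fun i => if (i : ℕ) = j - 1
          then a ⟨j - 1, Nat.lt_of_lt_of_le (Nat.sub_lt hj Nat.one_pos)
              (Nat.le_of_add_right_le h)⟩ *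
            c m (fun t => a ⟨j + t, Nat.lt_of_lt_of_le (Nat.add_lt_add_left t.isLt j) h⟩)
          else a (skipEmb m j h i))

def MomentCumulantFormula {K A : Type*} [Semiring K] [Semiring A] [Module K A] (F : A →ₗ[K] A)
    (ω : (n : ℕ) → Setoid (Fin n) → K) (cpart : (n : ℕ) → Setoid (Fin n) → (Fin n → A) → A) :
    Prop :=
  ∀ n : ℕ, 1 ≤ n → ∀ a : Fin n → A,
    F (List.ofFn a).prod =
      ∑ π ∈ Finset.univ.filter (fun π : Setoid (Fin n) => IsNoncrossing π), ω n π • cpart n π a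

namespace IsMultiplicativeExtension

variable {K A : Type*} [DivisionRing K] [Ring A] [Module K A] {F : A →ₗ[K] A}
  {ω : (n : ℕ) → Setoid (Fin n) → K} {c : (n : ℕ) → (Fin n → A) → A}
  {cpart : (n : ℕ) → Setoid (Fin n) → (Fin n → A) → A} {n : ℕ}

/-- `q` is the neighbour of the block into which the recursion multiplies its cumulant. -/
theorem exists_cpart_eq_comap (hcp : IsMultiplicativeExtension c cpart) {π : Setoid (Fin n)}
    {j m : ℕ} (hb : IsIntervalBlock π j m) {q : ℕ} (hq : q = j + m ∧ j + m < n ∨ q + 1 = j)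
    (a : Fin n → A) :
    ∃ a' : Fin (n - m) → A,
      cpart n π a = cpart (n - m) (π.comap (skipEmb m j hb.add_le)) a' ∧
      (∀ t, (skipEmb m j hb.add_le t : ℕ) ≠ q → a' t = a (skipEmb m j hb.add_le t)) ∧
      ∀ t, (skipEmb m j hb.add_le t : ℕ) = q →
        c m (intervalArgs a j m hb.add_le) = 0 ∨ a (skipEmb m j hb.add_le t) = 0 → a' t = 0 := by
  rcases hq with ⟨rfl, hlt⟩ | rfl
  · refine ⟨_, hcp.nest_right n m j hb.one_le hlt π hb.rel_iff a, fun t ht => if_neg ?_,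
      fun t ht h0 => ?_⟩
    · intro htj
      rw [skipEmb_val, if_neg (by omega)] at ht
      omega
    · have htj : (t : ℕ) = j := by rw [skipEmb_val] at ht; split_ifs at ht <;> omega
      have hskip : skipEmb m j hb.add_le t = ⟨j + m, hlt⟩ := Fin.ext ht
      rw [hskip] at h0
      exact (if_pos htj).trans (h0.elim (mul_eq_zero_of_left · _) (mul_eq_zero_of_right _))
  · refine ⟨_, hcp.nest_left n m (q + 1) hb.one_le (Nat.le_add_left 1 q) hb.add_le π hb.rel_iff a,
      fun t ht => if_neg ?_, fun t ht h0 => ?_⟩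
    · intro htq
      rw [skipEmb_val, if_pos (by omega)] at ht
      omega
    · have htq : (t : ℕ) = q := by rw [skipEmb_val] at ht; split_ifs at ht <;> omega
      have hskip : skipEmb m (q + 1) hb.add_le t = ⟨q + 1 - 1, by omega⟩ := Fin.ext (by simpa)
      rw [hskip] at h0
      exact (if_pos htq).trans (h0.elim (mul_eq_zero_of_right _) (mul_eq_zero_of_left · _))

theorem cpart_eq_zero_of_cumulant_eq_zero (hcp : IsMultiplicativeExtension c cpart) {m j : ℕ}
    (hZ : ∀ σ : Setoid (Fin (n - m)), IsNoncrossing σ →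
      ∀ (a' : Fin (n - m) → A) (t : Fin (n - m)), a' t = 0 → cpart (n - m) σ a' = 0)
    {π : Setoid (Fin n)} (hπ : IsNoncrossing π) (htop : π ≠ ⊤) (hb : IsIntervalBlock π j m)
    (a : Fin n → A) (hc : c m (intervalArgs a j m hb.add_le) = 0) : cpart n π a = 0 := by
  obtain ⟨q, hq⟩ := hb.exists_adjacent htop
  obtain ⟨a', hcpart, -, hmerge⟩ := hcp.exists_cpart_eq_comap hb hq a
  have := hb.add_le
  obtain ⟨t, ht⟩ := exists_skipEmb_eq hb.add_le (x := ⟨q, by omega⟩) (by simp only; omega)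
  rw [hcpart]
  exact hZ _ (hπ.comap (skipEmb_strictMono _)) a' t (hmerge t (by rw [ht]) (Or.inl hc))

theorem cpart_eq_zero_of_apply_eq_zero_of_ne_top (hcp : IsMultiplicativeExtension c cpart)
    (IH : ∀ m < n, ∀ σ : Setoid (Fin m), IsNoncrossing σ →
      ∀ (a : Fin m → A) (i : Fin m), a i = 0 → cpart m σ a = 0)
    {π : Setoid (Fin n)} (hπ : IsNoncrossing π) (htop : π ≠ ⊤) {a : Fin n → A} {i : Fin n}
    (hai : a i = 0) : cpart n π a = 0 := by
  obtain ⟨j, m, hb, -, -⟩ := hπ.exists_isIntervalBlock_within 0 (n - 1) i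
    fun x _ => ⟨Nat.zero_le _, by have := x.isLt; omega⟩
  have hmn := hb.lt_of_ne_top htop
  have hZ := IH (n - m) (by have := hb.one_le; omega)
  by_cases hi : j ≤ (i : ℕ) ∧ (i : ℕ) < j + m
  · refine hcp.cpart_eq_zero_of_cumulant_eq_zero hZ hπ htop hb a ?_
    rw [← hcp.top]
    exact IH m hmn ⊤ isNoncrossing_top _ ⟨i - j, by omega⟩
      (by simpa [intervalArgs, Nat.add_sub_cancel' hi.1] using hai)
  · obtain ⟨q, hq⟩ := hb.exists_adjacent htop
    obtain ⟨a', hcpart, hkeep, hmerge⟩ := hcp.exists_cpart_eq_comap hb hq a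
    obtain ⟨t, rfl⟩ := exists_skipEmb_eq hb.add_le (x := i) (by omega)
    rw [hcpart]
    refine hZ _ (hπ.comap (skipEmb_strictMono _)) a' t ?_
    by_cases htq : (skipEmb m j hb.add_le t : ℕ) = q
    · exact hmerge t htq (Or.inr hai)
    · exact (hkeep t htq).trans hai

theorem exists_cpart_insertSingleton_eq (hcp : IsMultiplicativeExtension c cpart) {k : ℕ}
    (hk : 1 ≤ k) (i : Fin (k + 1)) (a : Fin (k + 1) → A) (hci : c 1 (fun _ => a i) = a i) :
    ∃ a' : Fin k → A, (List.ofFn a').prod = (List.ofFn a).prod ∧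
      ∀ π : Setoid (Fin k), cpart (k + 1) (insertSingleton i π) a = cpart k π a' := by
  have hb := isIntervalBlock_insertSingleton i
  have hblock : c 1 (intervalArgs a i 1 i.isLt) = a i := by
    rw [← hci]
    congr 1
    funext t
    rw [Fin.fin_one_eq_zero t]
    rfl
  rcases Nat.lt_or_ge (i : ℕ) k with hik | hik
  · refine ⟨fun t => if (t : ℕ) = i then a i * a ⟨i + 1, by omega⟩ else a (i.succAbove t),
      ?_, fun π => ?_⟩
    · refine List.prod_ofFn_eq_of_mul_adjacent i hik a _ (if_pos rfl) (fun t ht => ?_)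
        fun t ht => ?_
      · rw [if_neg (by omega), Fin.succAbove_of_castSucc_lt _ _ (by simpa [Fin.lt_def])]
      · rw [if_neg (by omega), Fin.succAbove_of_le_castSucc _ _ (by simp [Fin.le_def]; omega)]
    · rw [hcp.nest_right (k + 1) 1 i le_rfl (by omega) _ (hb π).rel_iff a,
        skipEmb_one_eq_succAbove, comap_succAbove_insertSingleton]
      congr 1
      funext t
      split_ifs
      · exact congrArg (· * _) hblock
      · rfl
  · have hik : (i : ℕ) = k := by have := i.isLt; omega
    refine ⟨fun t => if (t : ℕ) = k - 1 then a ⟨k - 1, by omega⟩ * a i else a (i.succAbove t),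
      ?_, fun π => ?_⟩
    · refine List.prod_ofFn_eq_of_mul_adjacent (k - 1) (by omega) a _ ?_ (fun t ht => ?_)
        fun t ht => ?_
      · refine (if_pos rfl).trans (congrArg (fun x => a ⟨k - 1, by omega⟩ * a x) (Fin.ext ?_))
        change (i : ℕ) = k - 1 + 1
        omega
      · rw [if_neg (by omega), Fin.succAbove_of_castSucc_lt _ _ (by simp [Fin.lt_def]; omega)]
      · omega
    · rw [hcp.nest_left (k + 1) 1 i le_rfl (by omega) i.isLt _ (hb π).rel_iff a,
        skipEmb_one_eq_succAbove, comap_succAbove_insertSingleton]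
      congr 1
      funext t
      split_ifs
      · exact congr_arg₂ (· * ·) (congrArg a (Fin.ext (by simp; omega))) hblock
      · omega
      · omega
      · rfl

theorem cpart_top_eq_zero_of_sum_eq (hmc : MomentCumulantFormula F ω cpart) (hω : ω n ⊤ ≠ 0)
    (hn : 1 ≤ n) (a : Fin n → A)
    (h : ∑ π ∈ (Finset.univ.filter fun π : Setoid (Fin n) => IsNoncrossing π).erase ⊤,
      ω n π • cpart n π a = F (List.ofFn a).prod) :
    cpart n ⊤ a = 0 := by
  have hsplit := hmc n hn a
  rw [← Finset.add_sum_erase _ _ (by simpa using isNoncrossing_top), h, right_eq_add] at hsplit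
  exact (smul_eq_zero.1 hsplit).resolve_left hω

theorem cpart_eq_zero_of_apply_eq_zero (hcp : IsMultiplicativeExtension c cpart)
    (hmc : MomentCumulantFormula F ω cpart) (hω : ∀ n : ℕ, 1 ≤ n → ω n ⊤ ≠ 0) (n : ℕ) :
    ∀ π : Setoid (Fin n), IsNoncrossing π → ∀ (a : Fin n → A) (i : Fin n), a i = 0 →
      cpart n π a = 0 := by
  induction n using Nat.strong_induction_on with
  | _ n IH =>
  intro π hπ a i hai
  by_cases htop : π = ⊤
  · subst htop
    have hn : 1 ≤ n := by have := i.isLt; omega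
    refine cpart_top_eq_zero_of_sum_eq hmc (hω n hn) hn a ?_
    rw [List.prod_eq_zero (List.mem_ofFn.2 ⟨i, hai⟩), map_zero]
    refine Finset.sum_eq_zero fun σ hσ => ?_
    obtain ⟨hσtop, hσ⟩ := Finset.mem_erase.1 hσ
    rw [hcp.cpart_eq_zero_of_apply_eq_zero_of_ne_top IH (Finset.mem_filter.1 hσ).2 hσtop hai,
      smul_zero]
  · exact hcp.cpart_eq_zero_of_apply_eq_zero_of_ne_top IH hπ htop hai

theorem cpart_eq_zero_of_isFixedPt_of_ne_top (hcp : IsMultiplicativeExtension c cpart)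
    (hZ : ∀ (n : ℕ) (π : Setoid (Fin n)), IsNoncrossing π → ∀ (a : Fin n → A) (i : Fin n),
      a i = 0 → cpart n π a = 0)
    (IH : ∀ m < n, ∀ σ : Setoid (Fin m), IsNoncrossing σ → ∀ (a : Fin m → A) (i y : Fin m),
      y ≠ i → σ.r i y → Function.IsFixedPt F (a i) → cpart m σ a = 0)
    {π : Setoid (Fin n)} (hπ : IsNoncrossing π) (htop : π ≠ ⊤) {a : Fin n → A} {i y : Fin n}
    (hyi : y ≠ i) (hiy : π.r i y) (ha : Function.IsFixedPt F (a i)) : cpart n π a = 0 := by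
  rcases hπ.isIntervalBlock_or_nested i with ⟨j, m, hb, hji, hij⟩ |
    ⟨j, m, x, z, hb, hix, hiz, hxj, hjz⟩
  · have hy := (hb.rel_iff_of_mem ⟨hji, hij⟩ y).1 hiy
    have := hb.add_le
    refine hcp.cpart_eq_zero_of_cumulant_eq_zero (hZ _) hπ htop hb a ?_
    rw [← hcp.top]
    refine IH m (hb.lt_of_ne_top htop) ⊤ isNoncrossing_top _ ⟨i - j, by omega⟩ ⟨y - j, by omega⟩
      (fun h => hyi (Fin.ext ?_)) trivial ?_
    · rw [Fin.mk.injEq] at h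
      omega
    · simpa [intervalArgs, Nat.add_sub_cancel' hji] using ha
  · have := hb.add_le
    have hout : ∀ w, π.r i w → (w : ℕ) < j ∨ j + m ≤ w := fun w hiw => by
      by_contra! h
      have := (hb.rel_iff_of_mem h x).1 (π.trans (π.symm hiw) hix)
      omega
    obtain ⟨q, hq, hqi⟩ : ∃ q, (q = j + m ∧ j + m < n ∨ q + 1 = j) ∧ q ≠ i := by
      by_cases h : j + m = i
      · exact ⟨j - 1, Or.inr (by omega), by omega⟩
      · exact ⟨j + m, Or.inl ⟨rfl, by omega⟩, h⟩
    obtain ⟨a', hcpart, hkeep, -⟩ := hcp.exists_cpart_eq_comap hb hq a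
    obtain ⟨ti, rfl⟩ := exists_skipEmb_eq hb.add_le (hout i (π.refl i))
    obtain ⟨ty, rfl⟩ := exists_skipEmb_eq hb.add_le (hout y hiy)
    rw [hcpart]
    refine IH (n - m) (by have := hb.one_le; omega) _ (hπ.comap (skipEmb_strictMono _)) a' ti ty
      (fun h => hyi (h ▸ rfl)) hiy ?_
    rwa [hkeep ti hqi.symm]

theorem cpart_eq_zero_of_isFixedPt (hcp : IsMultiplicativeExtension c cpart)
    (hc1 : ∀ a : Fin 1 → A, c 1 a = F (a 0)) (hmc : MomentCumulantFormula F ω cpart)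
    (hω : ∀ n : ℕ, 1 ≤ n → ω n ⊤ ≠ 0)
    (hωSI : ∀ (n : ℕ) (r : Fin (n + 1)) (π : Setoid (Fin n)),
      ω (n + 1) (insertSingleton r π) = ω n π) (n : ℕ) :
    ∀ π : Setoid (Fin n), IsNoncrossing π → ∀ (a : Fin n → A) (i y : Fin n),
      y ≠ i → π.r i y → Function.IsFixedPt F (a i) → cpart n π a = 0 := by
  have hZ := hcp.cpart_eq_zero_of_apply_eq_zero hmc hω
  induction n using Nat.strong_induction_on with
  | _ n IH =>
  intro π hπ a i y hyi hiy ha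
  have hne_top {σ : Setoid (Fin n)} := hcp.cpart_eq_zero_of_isFixedPt_of_ne_top hZ IH (π := σ)
  by_cases htop : π = ⊤
  swap
  · exact hne_top hπ htop hyi hiy ha
  subst htop
  obtain ⟨k, rfl⟩ : ∃ k, n = k + 1 := ⟨n - 1, by have := i.isLt; omega⟩
  obtain rfl | hk := Nat.eq_zero_or_pos k
  · exact absurd (Fin.ext (by have := y.isLt; have := i.isLt; omega)) hyi
  obtain ⟨a', hprod, hins⟩ := hcp.exists_cpart_insertSingleton_eq hk i a (by rw [hc1]; exact ha)
  refine cpart_top_eq_zero_of_sum_eq hmc (hω _ (by omega)) (by omega) a ?_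
  calc _ = ∑ π ∈ (Finset.univ.filter fun π : Setoid (Fin (k + 1)) => IsNoncrossing π).filter
          (IsSingletonBlock i), ω (k + 1) π • cpart (k + 1) π a := by
        refine (Finset.sum_subset (fun σ hσ => ?_) fun σ hσ hσi => ?_).symm
        · obtain ⟨hσ, hσi⟩ := Finset.mem_filter.1 hσ
          exact Finset.mem_erase.2 ⟨fun h => hyi (hσi y (h ▸ trivial)), hσ⟩
        · obtain ⟨hσtop, hσ⟩ := Finset.mem_erase.1 hσ
          obtain ⟨z, hiz, hzi⟩ : ∃ z, σ.r i z ∧ z ≠ i := by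
            simpa [IsSingletonBlock, hσ] using hσi
          rw [hne_top (Finset.mem_filter.1 hσ).2 hσtop hzi hiz ha, smul_zero]
    _ = ∑ π ∈ Finset.univ.filter fun π : Setoid (Fin k) => IsNoncrossing π,
          ω (k + 1) (insertSingleton i π) • cpart (k + 1) (insertSingleton i π) a :=
        sum_filter_isSingletonBlock i _
    _ = F (List.ofFn a').prod := by simp only [hωSI, hins, hmc k hk a']
    _ = F (List.ofFn a).prod := by rw [hprod]

end IsMultiplicativeExtension

theorem cumulants_SI_vanish_on_constants
    (K : Type*) [Field K] (A : Type*) [Ring A] [Algebra K A]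
    (B : NonUnitalSubalgebra K A) (F : A →ₗ[K] A)
    (hFid : ∀ b ∈ B, F b = b)
    (ω : (n : ℕ) → Setoid (Fin n) → K)
    (hωinv : ∀ n : ℕ, 1 ≤ n → ω n ⊤ ≠ 0)
    (hωSI : ∀ (n : ℕ) (r : Fin (n + 1)) (π : Setoid (Fin n)),
      ω (n + 1) (insertSingleton r π) = ω n π)
    (c : (n : ℕ) → (Fin n → A) → A)
    (cpart : (n : ℕ) → Setoid (Fin n) → (Fin n → A) → A)
    (hc1 : ∀ a : Fin 1 → A, c 1 a = F (a 0))
    (hctop : ∀ (n : ℕ) (a : Fin n → A), cpart n ⊤ a = c n a)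
    (hrec : ∀ (n m j : ℕ) (hm : 1 ≤ m) (h : j + m < n) (π : Setoid (Fin n)),
      (∀ x : Fin n, π.r ⟨j, by omega⟩ x ↔ j ≤ (x : ℕ) ∧ (x : ℕ) < j + m) →
      ∀ a : Fin n → A,
      cpart n π a = cpart (n - m) (Setoid.comap (skipEmb m j (le_of_lt h)) π)
        (fun i => if (i : ℕ) = j
          then c m (fun t => a ⟨j + t, by have := t.isLt; omega⟩) * a ⟨j + m, by omega⟩
          else a (skipEmb m j (le_of_lt h) i)))
    (hrec' : ∀ (n m j : ℕ) (hm : 1 ≤ m) (hj : 1 ≤ j) (h : j + m ≤ n) (π : Setoid (Fin n)),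
      (∀ x : Fin n, π.r ⟨j, by omega⟩ x ↔ j ≤ (x : ℕ) ∧ (x : ℕ) < j + m) →
      ∀ a : Fin n → A,
      cpart n π a = cpart (n - m) (Setoid.comap (skipEmb m j h) π)
        (fun i => if (i : ℕ) = j - 1
          then a ⟨j - 1, by omega⟩ * c m (fun t => a ⟨j + t, by have := t.isLt; omega⟩)
          else a (skipEmb m j h i)))
    (hmc : ∀ (n : ℕ), 1 ≤ n → ∀ a : Fin n → A,
      F (List.ofFn a).prod =
        ∑ π ∈ Finset.univ.filter (fun π : Setoid (Fin n) => IsNoncrossing π),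
          ω n π • cpart n π a) :
    ∀ (n : ℕ), 2 ≤ n → ∀ a : Fin n → A, (∃ i, a i ∈ B) → c n a = 0 := by
  intro n hn a ⟨i, hi⟩
  have hcp : IsMultiplicativeExtension c cpart := ⟨hctop, hrec, hrec'⟩
  have : Nontrivial (Fin n) := Fin.nontrivial_iff_two_le.2 hn
  obtain ⟨y, hyi⟩ := exists_ne i
  rw [← hctop]
  exact hcp.cpart_eq_zero_of_isFixedPt hc1 hmc hωinv hωSI n ⊤ isNoncrossing_top a i y hyi
    trivial (hFid _ hi)
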